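/- arXiv:1802.06239 — 7 statements merged into one kernel-verified Lean document; each statement's English description precedes it below -/
import Mathlib

section
/- With Φ as above (strictly convex, Φ(0)=1, Φ'(0)=0, Φ'(t) → λ₀ < ∞), the function t ↦ Φ(t)/t on (0,∞) attains a unique minimum at some θ > 0, characterized by Φ'(θ) = Φ(θ)/θ; moreover for every λ with ρ := Φ(θ)/θ < λ < λ₀, the equation λ·t = Φ(t) has exactly two positive solutions, one in (0,θ) and one in (θ,∞), while for λ ≥ λ₀ it has exactly one positive solution. -/
/-!
Write `H(t) = t Φ'(t) - Φ(t)`, so that `(Φ(t)/t)' = H(t)/t²`. Term by term,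
`t h'(t) - h(t) = 1 - 1/√(1 + c t²)` for `h(t) = √(1 + c t²) - 1`, which increases from `0` to `1`;
hence `H` increases strictly from `H(0) = -1` to `-1 + Σ d_j/2`, which is positive exactly because
the total degree is at least `3`. Its unique zero `θ` is the minimum of `Φ(t)/t`, which decreases
on `(0, θ]` from `+∞` and increases on `[θ, ∞)` towards `λ₀ = lim Φ(t)/t`; the intermediate value
theorem then produces the solutions of `Φ(t)/t = λ`, and strict monotonicity makes them unique.
-/

open Real Set Filter Topology
open scoped ENNReal

noncomputable def hyperbola (c t : ℝ) : ℝ := √(1 + c * t ^ 2) - 1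

section Hyperbola

variable {c : ℝ}

lemma one_le_sqrt_one_add_mul_sq (hc : 0 ≤ c) (t : ℝ) : 1 ≤ √(1 + c * t ^ 2) :=
  one_le_sqrt.2 (le_add_of_nonneg_right (by positivity))

lemma hyperbola_nonneg (hc : 0 ≤ c) (t : ℝ) : 0 ≤ hyperbola c t :=
  sub_nonneg.2 (one_le_sqrt_one_add_mul_sq hc t)

lemma hyperbola_le (hc : 0 ≤ c) (t : ℝ) : hyperbola c t ≤ √c * |t| := by
  rw [hyperbola, sub_le_iff_le_add, sqrt_le_left (by positivity)]
  nlinarith [sq_sqrt hc, sq_abs t, mul_nonneg (sqrt_nonneg c) (abs_nonneg t)]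

lemma hasDerivAt_hyperbola (hc : 0 ≤ c) (t : ℝ) :
    HasDerivAt (hyperbola c) (c * t / √(1 + c * t ^ 2)) t := by
  have hpos : 0 < 1 + c * t ^ 2 := by positivity
  have h := (((hasDerivAt_pow 2 t).const_mul c).const_add 1).sqrt hpos.ne' |>.sub_const 1
  refine h.congr_deriv ?_
  field_simp
  norm_num

lemma abs_mul_div_sqrt_le (hc : 0 ≤ c) (t : ℝ) : |c * t / √(1 + c * t ^ 2)| ≤ √c := by
  have hs := one_le_sqrt_one_add_mul_sq hc t
  rw [abs_div, abs_of_pos (a := √_) (by linarith), div_le_iff₀ (by linarith)]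
  calc |c * t| = √c * √(c * t ^ 2) := by
        rw [sqrt_mul hc, sqrt_sq_eq_abs, ← mul_assoc, mul_self_sqrt hc, abs_mul, abs_of_nonneg hc]
    _ ≤ √c * √(1 + c * t ^ 2) := by gcongr; linarith

lemma continuous_mul_div_sqrt (hc : 0 ≤ c) : Continuous fun t => c * t / √(1 + c * t ^ 2) :=
  by fun_prop (disch := exact fun t => (one_pos.trans_le (one_le_sqrt_one_add_mul_sq hc t)).ne')

lemma mul_deriv_sub_hyperbola (hc : 0 ≤ c) (t : ℝ) :
    t * (c * t / √(1 + c * t ^ 2)) - hyperbola c t = 1 - (√(1 + c * t ^ 2))⁻¹ := by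
  have hs := one_le_sqrt_one_add_mul_sq hc t
  have hsq : √(1 + c * t ^ 2) ^ 2 = 1 + c * t ^ 2 := sq_sqrt (by positivity)
  rw [hyperbola]
  set s := √(1 + c * t ^ 2)
  field_simp
  linear_combination (-1 : ℝ) * hsq

lemma monotoneOn_one_sub_inv_sqrt (hc : 0 ≤ c) :
    MonotoneOn (fun t => 1 - (√(1 + c * t ^ 2))⁻¹) (Ici 0) := by
  intro s hs t _ hst
  have hs1 := one_le_sqrt_one_add_mul_sq hc s
  dsimp only
  gcongr

lemma strictMonoOn_one_sub_inv_sqrt (hc : 0 < c) :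
    StrictMonoOn (fun t => 1 - (√(1 + c * t ^ 2))⁻¹) (Ici 0) := by
  intro s hs t _ hst
  have hs1 := one_le_sqrt_one_add_mul_sq hc.le s
  dsimp only
  gcongr

lemma tendsto_one_sub_inv_sqrt (hc : 0 < c) :
    Tendsto (fun t => 1 - (√(1 + c * t ^ 2))⁻¹) atTop (𝓝 1) := by
  have h : Tendsto (fun t : ℝ => 1 + c * t ^ 2) atTop atTop :=
    tendsto_atTop_add_const_left _ _ ((tendsto_pow_atTop two_ne_zero).const_mul_atTop hc)
  simpa using (tendsto_inv_atTop_zero.comp (tendsto_sqrt_atTop.comp h)).const_sub 1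

lemma tendsto_hyperbola_div (hc : 0 ≤ c) :
    Tendsto (fun t => hyperbola c t / t) atTop (𝓝 √c) := by
  have h : Tendsto (fun t : ℝ => √((t ^ 2)⁻¹ + c) - t⁻¹) atTop (𝓝 (√(0 + c) - 0)) :=
    (((tendsto_inv_atTop_zero.comp (tendsto_pow_atTop two_ne_zero)).add_const c).sqrt).sub
      tendsto_inv_atTop_zero
  rw [zero_add, sub_zero] at h
  refine h.congr' ?_
  filter_upwards [eventually_gt_atTop 0] with t ht
  have h_sqrt : √((t ^ 2)⁻¹ + c) = √(1 + c * t ^ 2) / t := by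
    rw [show (t ^ 2)⁻¹ + c = (1 + c * t ^ 2) / t ^ 2 by field_simp, sqrt_div' _ (sq_nonneg t),
      sqrt_sq ht.le]
  rw [h_sqrt, hyperbola]
  field_simp

end Hyperbola

section Series

variable {ι : Type*} {w c : ι → ℝ}

lemma summable_mul_hyperbola (hw : ∀ j, 0 ≤ w j) (hc : ∀ j, 0 ≤ c j)
    (hs : Summable fun j => w j * √(c j)) (t : ℝ) :
    Summable fun j => w j * hyperbola (c j) t :=
  (hs.mul_right |t|).of_nonneg_of_le (fun j => mul_nonneg (hw j) (hyperbola_nonneg (hc j) t))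
    fun j => by rw [mul_assoc]; exact mul_le_mul_of_nonneg_left (hyperbola_le (hc j) t) (hw j)

lemma norm_mul_deriv_hyperbola_le (hw : ∀ j, 0 ≤ w j) (hc : ∀ j, 0 ≤ c j) (j : ι) (t : ℝ) :
    ‖w j * (c j * t / √(1 + c j * t ^ 2))‖ ≤ w j * √(c j) := by
  rw [norm_mul, Real.norm_of_nonneg (hw j), Real.norm_eq_abs]
  exact mul_le_mul_of_nonneg_left (abs_mul_div_sqrt_le (hc j) t) (hw j)

lemma summable_mul_deriv_hyperbola (hw : ∀ j, 0 ≤ w j) (hc : ∀ j, 0 ≤ c j)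
    (hs : Summable fun j => w j * √(c j)) (t : ℝ) :
    Summable fun j => w j * (c j * t / √(1 + c j * t ^ 2)) :=
  hs.of_norm_bounded fun j => norm_mul_deriv_hyperbola_le hw hc j t

lemma hasDerivAt_tsum_mul_hyperbola (hw : ∀ j, 0 ≤ w j) (hc : ∀ j, 0 ≤ c j)
    (hs : Summable fun j => w j * √(c j)) (t : ℝ) :
    HasDerivAt (fun s => ∑' j, w j * hyperbola (c j) s)
      (∑' j, w j * (c j * t / √(1 + c j * t ^ 2))) t :=
  hasDerivAt_tsum hs (fun j s => (hasDerivAt_hyperbola (hc j) s).const_mul (w j))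
    (fun j s => norm_mul_deriv_hyperbola_le hw hc j s) (summable_mul_hyperbola hw hc hs 0) t

lemma continuous_tsum_mul_deriv_hyperbola (hw : ∀ j, 0 ≤ w j) (hc : ∀ j, 0 ≤ c j)
    (hs : Summable fun j => w j * √(c j)) :
    Continuous fun t => ∑' j, w j * (c j * t / √(1 + c j * t ^ 2)) :=
  continuous_tsum (fun j => (continuous_mul_div_sqrt (hc j)).const_mul (w j)) hs
    fun j t => norm_mul_deriv_hyperbola_le hw hc j t

lemma tendsto_tsum_mul_hyperbola_div (hw : ∀ j, 0 ≤ w j) (hc : ∀ j, 0 ≤ c j)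
    (hs : Summable fun j => w j * √(c j)) :
    Tendsto (fun t => (∑' j, w j * hyperbola (c j) t) / t) atTop (𝓝 (∑' j, w j * √(c j))) := by
  have h := tendsto_tsum_of_dominated_convergence (f := fun t j => w j * (hyperbola (c j) t / t))
    hs (fun j => (tendsto_hyperbola_div (hc j)).const_mul (w j)) ?_
  · refine h.congr' ?_
    filter_upwards with t
    simp_rw [mul_div_assoc', tsum_div_const]
  · filter_upwards [eventually_gt_atTop 0] with t ht j
    rw [norm_mul, Real.norm_of_nonneg (hw j),
      Real.norm_of_nonneg (div_nonneg (hyperbola_nonneg (hc j) t) ht.le)]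
    refine mul_le_mul_of_nonneg_left ?_ (hw j)
    rw [div_le_iff₀ ht]
    simpa [abs_of_pos ht] using hyperbola_le (hc j) t

lemma summable_mul_one_sub_inv_sqrt (hw : ∀ j, 0 ≤ w j) (hc : ∀ j, 0 ≤ c j)
    (hs : Summable fun j => w j * √(c j)) (t : ℝ) :
    Summable fun j => w j * (1 - (√(1 + c j * t ^ 2))⁻¹) :=
  (((summable_mul_deriv_hyperbola hw hc hs t).mul_left t).sub
    (summable_mul_hyperbola hw hc hs t)).congr fun j => by
      rw [← mul_deriv_sub_hyperbola (hc j)]; ring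

lemma mul_tsum_deriv_sub_tsum_hyperbola (hw : ∀ j, 0 ≤ w j) (hc : ∀ j, 0 ≤ c j)
    (hs : Summable fun j => w j * √(c j)) (t : ℝ) :
    t * ∑' j, w j * (c j * t / √(1 + c j * t ^ 2)) - ∑' j, w j * hyperbola (c j) t =
      ∑' j, w j * (1 - (√(1 + c j * t ^ 2))⁻¹) := by
  rw [← tsum_mul_left, ← ((summable_mul_deriv_hyperbola hw hc hs t).mul_left t).tsum_sub
    (summable_mul_hyperbola hw hc hs t)]
  exact tsum_congr fun j => by rw [← mul_deriv_sub_hyperbola (hc j)]; ring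

lemma strictMonoOn_tsum_mul_one_sub_inv_sqrt (hw : ∀ j, 0 ≤ w j) (hc : ∀ j, 0 ≤ c j)
    (hs : Summable fun j => w j * √(c j)) {i : ι} (hwi : 0 < w i) (hci : 0 < c i) :
    StrictMonoOn (fun t => ∑' j, w j * (1 - (√(1 + c j * t ^ 2))⁻¹)) (Ici 0) :=
  fun s hs' t ht hst =>
    (summable_mul_one_sub_inv_sqrt hw hc hs s).tsum_lt_tsum
      (fun j => mul_le_mul_of_nonneg_left (monotoneOn_one_sub_inv_sqrt (hc j) hs' ht hst.le) (hw j))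
      (mul_lt_mul_of_pos_left (strictMonoOn_one_sub_inv_sqrt hci hs' ht hst) hwi)
      (summable_mul_one_sub_inv_sqrt hw hc hs t)

lemma eventually_one_lt_tsum_mul_one_sub_inv_sqrt (hw : ∀ j, 0 ≤ w j) (hc : ∀ j, 0 ≤ c j)
    (hs : Summable fun j => w j * √(c j)) {S : Finset ι} (hS : 1 < ∑ j ∈ S, w j)
    (hcS : ∀ j ∈ S, 0 < c j) :
    ∀ᶠ t in atTop, 1 < ∑' j, w j * (1 - (√(1 + c j * t ^ 2))⁻¹) := by
  have h : Tendsto (fun t => ∑ j ∈ S, w j * (1 - (√(1 + c j * t ^ 2))⁻¹)) atTop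
      (𝓝 (∑ j ∈ S, w j * 1)) :=
    tendsto_finsetSum S fun j hj => (tendsto_one_sub_inv_sqrt (hcS j hj)).const_mul (w j)
  simp_rw [mul_one] at h
  filter_upwards [h.eventually (eventually_gt_nhds hS)] with t ht
  refine ht.trans_le ((summable_mul_one_sub_inv_sqrt hw hc hs t).sum_le_tsum S fun j _ => ?_)
  exact mul_nonneg (hw j) (sub_nonneg.2 (inv_le_one_of_one_le₀ (one_le_sqrt_one_add_mul_sq (hc j) t)))

end Series

section Valley

variable {g : ℝ → ℝ} {θ ℓ a : ℝ}

lemma apply_lt_apply_of_strictAntiOn_of_strictMonoOn (hanti : StrictAntiOn g (Ioc 0 θ))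
    (hmono : StrictMonoOn g (Ici θ)) (hθ : 0 < θ) {t : ℝ} (ht : 0 < t) (htθ : t ≠ θ) :
    g θ < g t := by
  rcases htθ.lt_or_gt with h | h
  · exact hanti ⟨ht, h.le⟩ ⟨hθ, le_rfl⟩ h
  · exact hmono self_mem_Ici h.le h

lemma existsUnique_mem_Ioo_apply_eq (hanti : StrictAntiOn g (Ioc 0 θ)) (hθ : 0 < θ)
    (hg : ContinuousOn g (Ioi 0)) (h0 : Tendsto g (𝓝[>] 0) atTop) (ha : g θ < a) :
    ∃! t, t ∈ Ioo 0 θ ∧ g t = a := by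
  obtain ⟨t, ht, rfl⟩ := isPreconnected_Ioo.intermediate_value_Ioi
    (le_principal_iff.2 (Ioo_mem_nhdsLT hθ)) (le_principal_iff.2 (Ioo_mem_nhdsGT hθ))
    (hg.mono Ioo_subset_Ioi_self)
    ((hg.continuousAt (Ioi_mem_nhds hθ)).tendsto.mono_left nhdsWithin_le_nhds) h0 ha
  exact ⟨t, ⟨ht, rfl⟩, fun s ⟨hs, hgs⟩ => hanti.injOn ⟨hs.1, hs.2.le⟩ ⟨ht.1, ht.2.le⟩ hgs⟩

lemma existsUnique_mem_Ioi_apply_eq (hmono : StrictMonoOn g (Ici θ)) (hθ : 0 < θ)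
    (hg : ContinuousOn g (Ioi 0)) (hlim : Tendsto g atTop (𝓝 ℓ)) (ha : g θ < a) (haℓ : a < ℓ) :
    ∃! t, t ∈ Ioi θ ∧ g t = a := by
  obtain ⟨t, ht, rfl⟩ := isPreconnected_Ioi.intermediate_value_Ioo
    (le_principal_iff.2 self_mem_nhdsWithin) (le_principal_iff.2 (Ioi_mem_atTop θ))
    (hg.mono (Ioi_subset_Ioi hθ.le))
    ((hg.continuousAt (Ioi_mem_nhds hθ)).tendsto.mono_left nhdsWithin_le_nhds) hlim ⟨ha, haℓ⟩
  exact ⟨t, ⟨ht, rfl⟩, fun s ⟨hs, hgs⟩ =>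
    hmono.injOn (mem_Ici.2 (le_of_lt hs)) (mem_Ici.2 (le_of_lt ht)) hgs⟩

lemma apply_lt_of_strictMonoOn_of_tendsto (hmono : StrictMonoOn g (Ici θ))
    (hlim : Tendsto g atTop (𝓝 ℓ)) {t : ℝ} (ht : θ ≤ t) : g t < ℓ :=
  (hmono ht (mem_Ici.2 (by linarith)) (lt_add_one t)).trans_le <|
    ge_of_tendsto hlim <| (eventually_ge_atTop (t + 1)).mono fun s hs =>
      hmono.monotoneOn (mem_Ici.2 (by linarith)) (mem_Ici.2 (by linarith)) hs

lemma existsUnique_pos_apply_eq (hanti : StrictAntiOn g (Ioc 0 θ)) (hmono : StrictMonoOn g (Ici θ))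
    (hθ : 0 < θ) (hg : ContinuousOn g (Ioi 0)) (h0 : Tendsto g (𝓝[>] 0) atTop)
    (hlim : Tendsto g atTop (𝓝 ℓ)) (ha : ℓ ≤ a) : ∃! t, 0 < t ∧ g t = a := by
  obtain ⟨t, ⟨ht, rfl⟩, -⟩ := existsUnique_mem_Ioo_apply_eq hanti hθ hg h0
    ((apply_lt_of_strictMonoOn_of_tendsto hmono hlim le_rfl).trans_le ha)
  refine ⟨t, ⟨ht.1, rfl⟩, fun s ⟨hs, hgs⟩ => ?_⟩
  rcases le_or_gt θ s with hθs | hsθ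
  · exact absurd (hgs ▸ apply_lt_of_strictMonoOn_of_tendsto hmono hlim hθs) ha.not_gt
  · exact hanti.injOn ⟨hs, hsθ.le⟩ ⟨ht.1, ht.2.le⟩ hgs

end Valley

section DivSelf

variable {Φ Φ' : ℝ → ℝ} {θ : ℝ}

lemma hasDerivAt_div_self {t : ℝ} (hΦ : HasDerivAt Φ (Φ' t) t) (ht : t ≠ 0) :
    HasDerivAt (fun s => Φ s / s) ((t * Φ' t - Φ t) / t ^ 2) t :=
  (hΦ.div (hasDerivAt_id' t) ht).congr_deriv (by ring)

lemma continuousOn_div_self (hΦ : Continuous Φ) : ContinuousOn (fun t => Φ t / t) (Ioi 0) :=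
  hΦ.continuousOn.div continuousOn_id fun _ ht => ne_of_gt ht

lemma strictAntiOn_div_self (hΦ : ∀ t, HasDerivAt Φ (Φ' t) t)
    (hH : StrictMonoOn (fun t => t * Φ' t - Φ t) (Ici 0)) (hθ : 0 < θ)
    (hHθ : θ * Φ' θ - Φ θ = 0) : StrictAntiOn (fun t => Φ t / t) (Ioc 0 θ) := by
  refine strictAntiOn_of_deriv_neg (convex_Ioc 0 θ)
    ((continuousOn_div_self (continuous_iff_continuousAt.2 fun t => (hΦ t).continuousAt)).mono
      Ioc_subset_Ioi_self) fun t ht => ?_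
  rw [interior_Ioc] at ht
  rw [(hasDerivAt_div_self (hΦ t) ht.1.ne').deriv]
  exact div_neg_of_neg_of_pos (hHθ ▸ hH (mem_Ici.2 ht.1.le) (mem_Ici.2 hθ.le) ht.2)
    (pow_pos ht.1 2)

lemma strictMonoOn_div_self (hΦ : ∀ t, HasDerivAt Φ (Φ' t) t)
    (hH : StrictMonoOn (fun t => t * Φ' t - Φ t) (Ici 0)) (hθ : 0 < θ)
    (hHθ : θ * Φ' θ - Φ θ = 0) : StrictMonoOn (fun t => Φ t / t) (Ici θ) := by
  refine strictMonoOn_of_deriv_pos (convex_Ici θ)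
    ((continuousOn_div_self (continuous_iff_continuousAt.2 fun t => (hΦ t).continuousAt)).mono
      (Ici_subset_Ioi.2 hθ)) fun t ht => ?_
  rw [interior_Ici] at ht
  have ht0 : 0 < t := hθ.trans ht
  rw [(hasDerivAt_div_self (hΦ t) ht0.ne').deriv]
  exact div_pos (hHθ ▸ hH (mem_Ici.2 hθ.le) (mem_Ici.2 ht0.le) ht) (pow_pos ht0 2)

lemma tendsto_div_self_nhdsGT_zero (hΦ : ContinuousAt Φ 0) (h0 : 0 < Φ 0) :
    Tendsto (fun t => Φ t / t) (𝓝[>] 0) atTop := by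
  simpa only [div_eq_mul_inv] using
    (hΦ.tendsto.mono_left nhdsWithin_le_nhds).pos_mul_atTop h0 tendsto_inv_nhdsGT_zero

end DivSelf

theorem exists_min_div_self_of_strictMonoOn {Φ Φ' : ℝ → ℝ} {lam0 : ℝ}
    (hΦ : ∀ t, HasDerivAt Φ (Φ' t) t) (hΦ' : Continuous Φ') (h0 : 0 < Φ 0)
    (hH : StrictMonoOn (fun t => t * Φ' t - Φ t) (Ici 0))
    (hT : ∃ T, 0 < T ∧ 0 < T * Φ' T - Φ T) (hlim : Tendsto (fun t => Φ t / t) atTop (𝓝 lam0)) :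
    ∃ θ : ℝ, 0 < θ ∧ deriv Φ θ = Φ θ / θ ∧
      (∀ t : ℝ, 0 < t → Φ θ / θ ≤ Φ t / t) ∧
      (∀ θ' : ℝ, 0 < θ' → (∀ t : ℝ, 0 < t → Φ θ' / θ' ≤ Φ t / t) → θ' = θ) ∧
      (∀ lam : ℝ, Φ θ / θ < lam → lam < lam0 →
        (∃! t : ℝ, t ∈ Set.Ioo 0 θ ∧ lam * t = Φ t) ∧
        (∃! t : ℝ, t ∈ Set.Ioi θ ∧ lam * t = Φ t)) ∧
      (∀ lam : ℝ, lam0 ≤ lam → ∃! t : ℝ, 0 < t ∧ lam * t = Φ t) := by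
  have hΦc : Continuous Φ := continuous_iff_continuousAt.2 fun t => (hΦ t).continuousAt
  obtain ⟨T, hT, hHT⟩ := hT
  obtain ⟨θ, ⟨hθ, -⟩, hHθ⟩ : ∃ θ ∈ Ioo 0 T, θ * Φ' θ - Φ θ = 0 :=
    intermediate_value_Ioo hT.le (continuous_id.mul hΦ' |>.sub hΦc).continuousOn
      ⟨by simpa using h0, hHT⟩
  have hanti := strictAntiOn_div_self hΦ hH hθ hHθ
  have hmono := strictMonoOn_div_self hΦ hH hθ hHθ
  have hg := continuousOn_div_self hΦc
  have hg0 := tendsto_div_self_nhdsGT_zero hΦc.continuousAt h0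
  have hlt {t : ℝ} (ht : 0 < t) (htθ : t ≠ θ) : Φ θ / θ < Φ t / t :=
    apply_lt_apply_of_strictAntiOn_of_strictMonoOn hanti hmono hθ ht htθ
  have hsol {P : ℝ → Prop} {lam : ℝ} (hP : ∀ t, P t → 0 < t) :
      (∃! t, P t ∧ lam * t = Φ t) ↔ ∃! t, P t ∧ Φ t / t = lam :=
    existsUnique_congr fun t => and_congr_right fun ht => by
      rw [div_eq_iff (hP t ht).ne', eq_comm]
  refine ⟨θ, hθ, ?_, fun t ht => ?_, fun θ' hθ' hmin => ?_, fun lam hlam hlam0 => ?_,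
    fun lam hlam => ?_⟩
  · rw [(hΦ θ).deriv, eq_div_iff hθ.ne']
    linarith
  · rcases eq_or_ne t θ with rfl | htθ
    · exact le_rfl
    · exact (hlt ht htθ).le
  · by_contra hne
    exact (hlt hθ' hne).not_ge (hmin θ hθ)
  · rw [hsol fun t ht => ht.1, hsol fun t (ht : t ∈ Ioi θ) => hθ.trans ht]
    exact ⟨existsUnique_mem_Ioo_apply_eq hanti hθ hg hg0 hlam,
      existsUnique_mem_Ioi_apply_eq hmono hθ hg hlim hlam hlam0⟩
  · rw [hsol fun t ht => ht]
    exact existsUnique_pos_apply_eq hanti hmono hθ hg hg0 hlim hlam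

lemma exists_finset_lt_sum_of_lt_tsum {ι : Type*} {d : ι → ℕ} {n : ℕ}
    (h : (n : ℝ≥0∞) < ∑' j, (d j : ℝ≥0∞)) : ∃ S : Finset ι, (n : ℝ) < ∑ j ∈ S, (d j : ℝ) := by
  rw [ENNReal.tsum_eq_iSup_sum, lt_iSup_iff] at h
  obtain ⟨S, hS⟩ := h
  exact ⟨S, by exact_mod_cast hS⟩

lemma summable_mul_sqrt_mul {ι : Type*} {w a b : ι → ℝ} (hw : ∀ j, 0 ≤ w j) (ha : ∀ j, 0 ≤ a j)
    (hb : ∀ j, 0 ≤ b j) (hsa : Summable fun j => w j * a j) (hsb : Summable fun j => w j * b j) :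
    Summable fun j => w j * √(a j * b j) :=
  (hsa.add hsb).of_nonneg_of_le (fun j => mul_nonneg (hw j) (sqrt_nonneg _)) fun j => by
    rw [← mul_add]
    refine mul_le_mul_of_nonneg_left (sqrt_le_iff.2 ⟨add_nonneg (ha j) (hb j), ?_⟩) (hw j)
    nlinarith [ha j, hb j, mul_nonneg (ha j) (hb j)]

theorem stmt6_general {I : Type*} (neg : I → I)
    (d : I → ℕ) (p : I → ℝ) (hp : ∀ j, 0 < p j)
    (hsum1 : HasSum (fun j => (d j : ℝ) * p j) 1)
    (hsum2 : Summable (fun j => (d j : ℝ) * p (neg j)))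
    (hdeg : 3 ≤ ∑' j, (d j : ENNReal))
    (Φ : ℝ → ℝ)
    (hΦ : ∀ t : ℝ, Φ t =
      1 + ∑' j, ((d j : ℝ) / 2) * (Real.sqrt (1 + 4 * p j * p (neg j) * t ^ 2) - 1))
    (lam0 : ℝ) (hlam0 : lam0 = ∑' j, (d j : ℝ) * Real.sqrt (p j * p (neg j))) :
    ∃ θ : ℝ, 0 < θ ∧ deriv Φ θ = Φ θ / θ ∧
      (∀ t : ℝ, 0 < t → Φ θ / θ ≤ Φ t / t) ∧
      (∀ θ' : ℝ, 0 < θ' → (∀ t : ℝ, 0 < t → Φ θ' / θ' ≤ Φ t / t) → θ' = θ) ∧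
      (∀ lam : ℝ, Φ θ / θ < lam → lam < lam0 →
        (∃! t : ℝ, t ∈ Set.Ioo 0 θ ∧ lam * t = Φ t) ∧
        (∃! t : ℝ, t ∈ Set.Ioi θ ∧ lam * t = Φ t)) ∧
      (∀ lam : ℝ, lam0 ≤ lam → ∃! t : ℝ, 0 < t ∧ lam * t = Φ t) := by
  set w : I → ℝ := fun j => (d j : ℝ) / 2
  set c : I → ℝ := fun j => 4 * p j * p (neg j)
  have hw (j : I) : 0 ≤ w j := by positivity
  have hc (j : I) : 0 < c j := mul_pos (mul_pos four_pos (hp j)) (hp (neg j))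
  have hc' (j : I) : 0 ≤ c j := (hc j).le
  have hwc (j : I) : w j * √(c j) = d j * √(p j * p (neg j)) := by
    simp only [w, c]
    rw [mul_assoc 4, sqrt_mul zero_le_four, show √4 = 2 by norm_num]
    ring
  have hs : Summable fun j => w j * √(c j) := by
    simp_rw [hwc]
    exact summable_mul_sqrt_mul (fun j => Nat.cast_nonneg _) (fun j => (hp j).le)
      (fun j => (hp (neg j)).le) hsum1.summable hsum2
  obtain ⟨S, hS⟩ := exists_finset_lt_sum_of_lt_tsum (n := 2) (lt_of_lt_of_le (by norm_num) hdeg)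
  have hwS : 1 < ∑ j ∈ S, w j := by rw [← Finset.sum_div]; push_cast at hS; linarith
  obtain ⟨i, -, hi⟩ := Finset.exists_lt_of_sum_lt (f := 0) (hwS.trans_le' (by simp))
  obtain ⟨T, hT, hT0⟩ := ((eventually_one_lt_tsum_mul_one_sub_inv_sqrt hw hc' hs hwS
    fun j _ => hc j).and (eventually_gt_atTop 0)).exists
  have hH := mul_tsum_deriv_sub_tsum_hyperbola hw hc' hs
  have hlim := tendsto_inv_atTop_zero.add (tendsto_tsum_mul_hyperbola_div hw hc' hs)
  rw [zero_add, tsum_congr hwc, ← hlam0] at hlim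
  obtain rfl : Φ = fun t => 1 + ∑' j, w j * hyperbola (c j) t := funext hΦ
  refine exists_min_div_self_of_strictMonoOn
    (fun t => (hasDerivAt_tsum_mul_hyperbola hw hc' hs t).const_add 1)
    (continuous_tsum_mul_deriv_hyperbola hw hc' hs) (by simp [hyperbola])
    (fun s hs' t ht hst => ?_) ⟨T, hT0, by linarith [hH T]⟩ (by simpa only [add_div, one_div])
  have := strictMonoOn_tsum_mul_one_sub_inv_sqrt hw hc' hs hi (hc i) hs' ht hst
  dsimp only at this ⊢
  linarith [hH s, hH t]

/-- For `Φ(t) = 1 + Σ_j (d_j/2)(√(1+4p_j p_{-j} t²) - 1)` with total degree `Σ d_j ≥ 3`: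
the function `t ↦ Φ(t)/t` on `(0,∞)` attains a unique minimum at some `θ > 0`,
characterized by `Φ'(θ) = Φ(θ)/θ`; for `ρ := Φ(θ)/θ < λ < λ₀` the equation `λt = Φ(t)`
has exactly two positive solutions, one in `(0,θ)` and one in `(θ,∞)`, while for
`λ ≥ λ₀` it has exactly one positive solution. -/
theorem stmt6 {I : Type*} [Countable I] (neg : I → I) (hinv : ∀ j, neg (neg j) = j)
    (d : I → ℕ) (hd : ∀ j, 1 ≤ d j) (p : I → ℝ) (hp : ∀ j, 0 < p j)
    (hsum1 : HasSum (fun j => (d j : ℝ) * p j) 1)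
    (hsum2 : Summable (fun j => (d j : ℝ) * p (neg j)))
    (hdeg : 3 ≤ ∑' j, (d j : ENNReal))
    (Φ : ℝ → ℝ)
    (hΦ : ∀ t : ℝ, Φ t =
      1 + ∑' j, ((d j : ℝ) / 2) * (Real.sqrt (1 + 4 * p j * p (neg j) * t ^ 2) - 1))
    (lam0 : ℝ) (hlam0 : lam0 = ∑' j, (d j : ℝ) * Real.sqrt (p j * p (neg j))) :
    ∃ θ : ℝ, 0 < θ ∧ deriv Φ θ = Φ θ / θ ∧
      (∀ t : ℝ, 0 < t → Φ θ / θ ≤ Φ t / t) ∧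
      (∀ θ' : ℝ, 0 < θ' → (∀ t : ℝ, 0 < t → Φ θ' / θ' ≤ Φ t / t) → θ' = θ) ∧
      (∀ lam : ℝ, Φ θ / θ < lam → lam < lam0 →
        (∃! t : ℝ, t ∈ Set.Ioo 0 θ ∧ lam * t = Φ t) ∧
        (∃! t : ℝ, t ∈ Set.Ioi θ ∧ lam * t = Φ t)) ∧
      (∀ lam : ℝ, lam0 ≤ lam → ∃! t : ℝ, 0 < t ∧ lam * t = Φ t) :=
  stmt6_general neg d p hp hsum1 hsum2 hdeg Φ hΦ lam0 hlam0
end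

section
/- Let α ∈ (0,1), q ≥ 2, ρ = 2√(α(1-α)), λ₀ = ((q+1)/(2√q))ρ. Then λ₀ > ρ, and for real λ > ρ, F₊(λ)F₋(λ) ≤ 1/q < 1, where F₋(λ) = (λ/(2α))(1-√(1-ρ²/λ²)) and F₊(λ) = (α/((1-α)q))F₋(λ). -/
/-- Let `α ∈ (0,1)`, `q ≥ 2`, `ρ = 2√(α(1-α))`, `λ₀ = ((q+1)/(2√q))ρ`. Then `λ₀ > ρ`,
and for real `λ > ρ`, `F₊(λ)F₋(λ) ≤ 1/q < 1`, where `F₋(λ) = (λ/(2α))(1-√(1-ρ²/λ²))`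
and `F₊(λ) = (α/((1-α)q))F₋(λ)`. -/
theorem stmt9 (α : ℝ) (hα : α ∈ Set.Ioo (0:ℝ) 1) (q : ℕ) (hq : 2 ≤ q)
    (ρ : ℝ) (hρ : ρ = 2 * Real.sqrt (α * (1 - α)))
    (lam0 : ℝ) (hlam0 : lam0 = (((q : ℝ) + 1) / (2 * Real.sqrt q)) * ρ) :
    ρ < lam0 ∧
    ∀ lam : ℝ, ρ < lam →
      (α / ((1 - α) * q)) * ((lam / (2 * α)) * (1 - Real.sqrt (1 - ρ^2 / lam^2))) *
        ((lam / (2 * α)) * (1 - Real.sqrt (1 - ρ^2 / lam^2))) ≤ 1 / (q : ℝ) ∧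
      1 / (q : ℝ) < 1 := by
  obtain ⟨hα0, hα1⟩ := hα
  have hqR : (2:ℝ) ≤ (q:ℝ) := by exact_mod_cast hq
  have hq0 : (0:ℝ) < (q:ℝ) := by linarith
  have haa : 0 < α * (1 - α) := by nlinarith
  have hρpos : 0 < ρ := by
    rw [hρ]; positivity
  have hρ2 : ρ ^ 2 = 4 * (α * (1 - α)) := by
    rw [hρ, mul_pow, Real.sq_sqrt haa.le]; ring
  constructor
  · -- ρ < lam0
    rw [hlam0]
    have hsq0 : (0:ℝ) < Real.sqrt q := Real.sqrt_pos.mpr hq0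
    have hsq2 : Real.sqrt q ^ 2 = (q:ℝ) := Real.sq_sqrt hq0.le
    have hsq1 : 1 < Real.sqrt q := by
      nlinarith [hsq2, hsq0]
    have hfrac : 1 < ((q:ℝ) + 1) / (2 * Real.sqrt q) := by
      rw [lt_div_iff₀ (by positivity)]
      nlinarith [sq_nonneg (Real.sqrt q - 1)]
    nlinarith
  · intro lam hlam
    have hlam0' : 0 < lam := lt_trans hρpos hlam
    set s := Real.sqrt (1 - ρ^2 / lam^2) with hs
    have hratio : ρ^2 / lam^2 ≤ 1 := by
      rw [div_le_one (by positivity)]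
      nlinarith
    have hsnn : 0 ≤ s := Real.sqrt_nonneg _
    have hs1 : s ≤ 1 := by
      rw [hs]
      have h0 : 0 ≤ ρ^2 / lam^2 := by positivity
      exact Real.sqrt_le_one.mpr (by linarith)
    have hs2 : s ^ 2 = 1 - ρ^2 / lam^2 := Real.sq_sqrt (by linarith)
    have hs2' : s ^ 2 * lam ^ 2 = lam ^ 2 - ρ ^ 2 := by
      rw [hs2]
      field_simp
    have key : lam ^ 2 * (1 - s) ^ 2 ≤ ρ ^ 2 := by
      nlinarith [mul_nonneg (mul_nonneg hsnn (sub_nonneg.mpr hs1)) (sq_nonneg lam)]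
    have hαne : α ≠ 0 := ne_of_gt hα0
    have h1αne : (1 - α) ≠ 0 := by linarith
    have hqne : (q:ℝ) ≠ 0 := ne_of_gt hq0
    constructor
    · have hL : (α / ((1 - α) * q)) * ((lam / (2 * α)) * (1 - s)) *
          ((lam / (2 * α)) * (1 - s)) = lam ^ 2 * (1 - s) ^ 2 / (4 * (α * (1 - α)) * q) := by
        field_simp
        ring
      rw [hL, div_le_div_iff₀ (by positivity) hq0, ← hρ2]
      nlinarith
    · rw [div_lt_one hq0]; linarith
end

section
/- Let T be a countable tree with stochastic nearest-neighbour transition matrix P and let λ ∈ ℂ. Suppose the oriented edges carry weights f(x,y) ∈ ℂ with f(x,y)f(y,x) ≠ 1, u(x,x) := Σ_v p(x,v)f(v,x) ≠ λ (sum absolutely convergent), and λf(x,y) = p(x,y) + (u(x,x) - p(x,y)f(y,x))f(x,y) for all neighbours x,y. Extend f multiplicatively along geodesics. Then for fixed y, the function x ↦ f(x,y) satisfies Pf(·,y)(x) = λ f(x,y) for x ≠ y and Pf(·,y)(y) = u(y,y). -/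
open SimpleGraph

private lemma tree_path_len {V : Type*} {G : SimpleGraph V} (hT : G.IsTree) {a b : V}
    {w : G.Walk a b} (hw : w.IsPath) : w.length = G.dist a b := by
  obtain ⟨q, hq, hql⟩ := hT.isConnected.exists_path_of_dist a b
  have h : (⟨w, hw⟩ : G.Path a b) = ⟨q, hq⟩ := hT.IsAcyclic.path_unique _ _
  have hwq : w = q := congrArg Subtype.val h
  rw [hwq, hql]

private lemma tree_step {V : Type*} {G : SimpleGraph V} (hT : G.IsTree) {x y : V}
    (hxy : x ≠ y) :
    ∃ z, G.Adj x z ∧ G.dist z y + 1 = G.dist x y ∧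
      ∀ v, G.Adj x v → v ≠ z → G.dist v y = G.dist x y + 1 := by
  classical
  obtain ⟨w, hwp, hwl⟩ := hT.isConnected.exists_path_of_dist x y
  cases w with
  | nil => exact absurd rfl hxy
  | @cons _ z _ hxz t =>
    have htp : t.IsPath := hwp.of_cons
    have htl : t.length = G.dist z y := tree_path_len hT htp
    have hwl' : t.length + 1 = G.dist x y := by simpa using hwl
    refine ⟨z, hxz, by omega, ?_⟩
    intro v hadj hvz
    -- upper bound
    have hub : G.dist v y ≤ G.dist x y + 1 := by
      have h1 : G.dist v y ≤ G.dist v x + G.dist x y :=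
        hT.isConnected.dist_triangle
      have h2 : G.dist v x = 1 := dist_eq_one_iff_adj.mpr hadj.symm
      omega
    -- lower bound: suppose dist v y ≤ dist x y, derive contradiction
    have hlb : ¬ G.dist v y ≤ G.dist x y := by
      intro hle
      obtain ⟨q, hqp, hql⟩ := hT.isConnected.exists_path_of_dist v y
      by_cases hx : x ∈ q.support
      · -- then x = v, contradicting adjacency
        have hd1 : G.dist x y ≤ (q.dropUntil x hx).length :=
          dist_le _
        have hsp : (q.takeUntil x hx).length + (q.dropUntil x hx).length = q.length := by
          rw [← SimpleGraph.Walk.length_append, SimpleGraph.Walk.take_spec]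
        have ht0 : (q.takeUntil x hx).length = 0 := by omega
        have : v = x := SimpleGraph.Walk.eq_of_length_eq_zero ht0
        exact hadj.ne' this
      · -- cons is a path from x to y
        have hcp : (SimpleGraph.Walk.cons hadj q).IsPath := hqp.cons hx
        have hcl : (SimpleGraph.Walk.cons hadj q).length = G.dist x y :=
          tree_path_len hT hcp
        have hcl' : q.length + 1 = G.dist x y := by simpa using hcl
        -- both cons walks are paths x → y, so equal, so v = z
        have heq : (⟨SimpleGraph.Walk.cons hadj q, hcp⟩ : G.Path x y) =
            ⟨SimpleGraph.Walk.cons hxz t, hwp⟩ := hT.IsAcyclic.path_unique _ _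
        have heqw : SimpleGraph.Walk.cons hadj q = SimpleGraph.Walk.cons hxz t :=
          congrArg Subtype.val heq
        have hgv : (SimpleGraph.Walk.cons hadj q).getVert 1 =
            (SimpleGraph.Walk.cons hxz t).getVert 1 := by rw [heqw]
        simp [SimpleGraph.Walk.getVert_cons_succ] at hgv
        exact hvz hgv
    omega

/-- Let `T` be a countable tree with stochastic nearest-neighbour transition matrix `P`
and `λ ∈ ℂ`. Suppose the oriented edges carry weights `f(x,y)` satisfying the three
λ-weight axioms, and let `F` be the multiplicative extension of `f` along geodesics.
Then for fixed `y`, `PF(·,y)(x) = λ F(x,y)` for `x ≠ y`, and `PF(·,y)(y) = u(y,y)`. -/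
theorem stmt10 {V : Type*} [Countable V] (G : SimpleGraph V) (hT : G.IsTree)
    (p : V → V → ℝ)
    (hpadj : ∀ x y, 0 < p x y ↔ G.Adj x y)
    (hp0 : ∀ x y, ¬ G.Adj x y → p x y = 0)
    (hstoch : ∀ x, HasSum (fun y => p x y) 1)
    (lam : ℂ) (f : V → V → ℂ) (u : V → ℂ)
    (hu : ∀ x, HasSum (fun v => (p x v : ℂ) * f v x) (u x))
    (hne1 : ∀ x y, G.Adj x y → f x y * f y x ≠ 1)
    (hnela : ∀ x, u x ≠ lam)
    (hla : ∀ x y, G.Adj x y →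
      lam * f x y = (p x y : ℂ) + (u x - (p x y : ℂ) * f y x) * f x y)
    -- `F` is the multiplicative extension of `f` along geodesics:
    (F : V → V → ℂ)
    (hFdiag : ∀ x, F x x = 1)
    (hFmul : ∀ x y z : V, x ≠ y → G.Adj x z → G.dist z y + 1 = G.dist x y →
      F x y = f x z * F z y)
    (y : V) :
    (∀ x, x ≠ y → HasSum (fun v => (p x v : ℂ) * F v y) (lam * F x y)) ∧
    HasSum (fun v => (p y v : ℂ) * F v y) (u y) := by
  classical
  constructor
  · intro x hxy
    obtain ⟨z, hxz, hdz, hv⟩ := tree_step hT hxy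
    have hFx : F x y = f x z * F z y := hFmul x y z hxy hxz hdz
    have key : ∀ v, v ≠ z → (p x v : ℂ) * F v y = ((p x v : ℂ) * f v x) * F x y := by
      intro v hvz
      by_cases hadj : G.Adj x v
      · have hd := hv v hadj hvz
        have hvy : v ≠ y := by
          intro h; subst h
          rw [SimpleGraph.dist_self] at hd
          omega
        have hF := hFmul v y x hvy hadj.symm (by omega)
        rw [hF]; ring
      · rw [hp0 x v hadj]; push_cast; ring
    have hsum : HasSum (fun v => ((p x v : ℂ) * f v x) * F x y) (u x * F x y) :=
      (hu x).mul_right _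
    have h2 := hsum.update z ((p x z : ℂ) * F z y)
    have hfun : Function.update (fun v => ((p x v : ℂ) * f v x) * F x y) z
        ((p x z : ℂ) * F z y) = fun v => (p x v : ℂ) * F v y := by
      funext v
      by_cases hvz : v = z
      · subst hvz; rw [Function.update_self]
      · rw [Function.update_of_ne hvz, key v hvz]
    rw [hfun] at h2
    have hval : (p x z : ℂ) * F z y - (p x z : ℂ) * f z x * F x y + u x * F x y
        = lam * F x y := by
      rw [hFx]
      linear_combination (-(F z y)) * (hla x z hxz)
    rwa [hval] at h2
  · have hFadj : ∀ v, (p y v : ℂ) * F v y = (p y v : ℂ) * f v y := by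
      intro v
      by_cases hadj : G.Adj y v
      · have hvy : v ≠ y := hadj.ne'
        have hd : G.dist y y + 1 = G.dist v y := by
          rw [SimpleGraph.dist_self, SimpleGraph.dist_eq_one_iff_adj.mpr hadj.symm]
        rw [hFmul v y y hvy hadj.symm hd, hFdiag y, mul_one]
      · rw [hp0 y v hadj]; push_cast; ring
    have : (fun v => (p y v : ℂ) * F v y) = fun v => (p y v : ℂ) * f v y :=
      funext hFadj
    rw [this]
    exact hu y
end

section
/- Under the axioms of the previous statement, setting g(x,y) = f(x,y)/(λ - u(y,y)), the function x ↦ g(x,y) satisfies the resolvent equation P g(·,y)(x) = λ g(x,y) - δ_x(y) for all x,y ∈ T. -/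
/-!
At `x = y` the defining series of `u x` already is `P F(·,x)(x)`, since `F(v,x) = f(v,x)` for the
neighbours `v` of `x`. For `x ≠ y`, exactly one neighbour `z` of `x` lies on the geodesic to `y`;
every other neighbour `v` has `F(v,y) = f(v,x) F(x,y)`. Hence `P F(·,y)(x)` is the series of
`u x · F(x,y)` with its `z`-term `p(x,z) f(z,x) F(x,y)` replaced by `p(x,z) F(z,y)`, and the
weight equation at the edge `xz`, multiplied by `F(z,y)`, turns the sum into `λ F(x,y)`.
Dividing by `λ - u(y)` gives the resolvent equation.
-/

open SimpleGraph

namespace SimpleGraph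

variable {V : Type*} {G : SimpleGraph V}

lemma Walk.dist_le_length_of_mem_support {a v y : V} (q : G.Walk a y) (hv : v ∈ q.support) :
    G.dist v y ≤ q.length := by
  classical
  exact (G.dist_le _).trans (q.length_dropUntil_le_length hv)

lemma IsTree.exists_adj_dist_add_one (hT : G.IsTree) {x y : V} (hxy : x ≠ y) :
    ∃ z, G.Adj x z ∧ G.dist z y + 1 = G.dist x y := by
  obtain ⟨P, hP⟩ := hT.connected.exists_walk_length_eq_dist x y
  cases P with
  | nil => exact absurd rfl hxy
  | @cons _ z _ hxz W =>
    refine ⟨z, hxz, ?_⟩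
    have hzW : G.dist z y ≤ W.length := G.dist_le W
    rw [Walk.length_cons] at hP
    have := hT.dist_eq_dist_add_one_of_adj y hxz
    rw [G.dist_comm (u := y), G.dist_comm (u := y)] at this
    omega

lemma IsAcyclic.eq_of_adj_of_dist_add_one (hG : G.IsAcyclic) {x y z w : V}
    (hz : G.Reachable z y) (hw : G.Reachable w y) (hxz : G.Adj x z) (hxw : G.Adj x w)
    (hzy : G.dist z y + 1 = G.dist x y) (hwy : G.dist w y + 1 = G.dist x y) : z = w := by
  obtain ⟨q, hq, hql⟩ := hz.exists_path_of_dist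
  obtain ⟨r, hr, hrl⟩ := hw.exists_path_of_dist
  have hxq : x ∉ q.support := fun h => by
    have := q.dist_le_length_of_mem_support h; omega
  have hxr : x ∉ r.support := fun h => by
    have := r.dist_le_length_of_mem_support h; omega
  have hpaths := (hG.subsingleton_path x y).elim
    ⟨_, hq.cons (h := hxz) hxq⟩ ⟨_, hr.cons (h := hxw) hxr⟩
  simpa using congrArg (fun P : G.Path x y => (P : G.Walk x y).snd) hpaths

lemma IsTree.dist_eq_dist_add_one_of_adj_of_ne (hT : G.IsTree) {x y z w : V} (hxz : G.Adj x z)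
    (hzy : G.dist z y + 1 = G.dist x y) (hxw : G.Adj x w) (hwz : w ≠ z) :
    G.dist x y + 1 = G.dist w y := by
  have := hT.dist_eq_dist_add_one_of_adj y hxw
  rw [G.dist_comm (u := y), G.dist_comm (u := y)] at this
  refine (this.resolve_left fun hwy => hwz ?_).symm
  exact hT.isAcyclic.eq_of_adj_of_dist_add_one (hT.connected w y) (hT.connected z y) hxw hxz
    hwy.symm hzy

end SimpleGraph

section Resolvent

variable {V : Type*} {G : SimpleGraph V} {p : V → V → ℝ} {lam : ℂ} {f F : V → V → ℂ}
  {u : V → ℂ}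

lemma hasSum_mul_geodesicProduct_self (hp0 : ∀ x y, ¬ G.Adj x y → p x y = 0) (x : V)
    (hu : HasSum (fun v => (p x v : ℂ) * f v x) (u x))
    (hFdiag : ∀ x, F x x = 1)
    (hFmul : ∀ x y z : V, x ≠ y → G.Adj x z → G.dist z y + 1 = G.dist x y →
      F x y = f x z * F z y) :
    HasSum (fun v => (p x v : ℂ) * F v x) (u x) := by
  convert hu using 2 with v
  by_cases hxv : G.Adj x v
  · have hvx : G.dist x x + 1 = G.dist v x := by
      rw [dist_self, dist_eq_one_iff_adj.mpr hxv.symm]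
    rw [hFmul v x x hxv.ne' hxv.symm hvx, hFdiag, mul_one]
  · simp [hp0 x v hxv]

lemma hasSum_mul_geodesicProduct_of_ne (hT : G.IsTree) (hp0 : ∀ x y, ¬ G.Adj x y → p x y = 0)
    {x y : V} (hxy : x ≠ y) (hu : HasSum (fun v => (p x v : ℂ) * f v x) (u x))
    (hla : ∀ z, G.Adj x z →
      lam * f x z = (p x z : ℂ) + (u x - (p x z : ℂ) * f z x) * f x z)
    (hFmul : ∀ x y z : V, x ≠ y → G.Adj x z → G.dist z y + 1 = G.dist x y →
      F x y = f x z * F z y) :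
    HasSum (fun v => (p x v : ℂ) * F v y) (lam * F x y) := by
  classical
  obtain ⟨z, hxz, hzy⟩ := hT.exists_adj_dist_add_one hxy
  have hF : F x y = f x z * F z y := hFmul x y z hxy hxz hzy
  have hterm : Function.update (fun v => (p x v : ℂ) * f v x * F x y) z ((p x z : ℂ) * F z y) =
      fun v => (p x v : ℂ) * F v y := by
    funext v
    rcases eq_or_ne v z with rfl | hvz
    · rw [Function.update_self]
    rw [Function.update_of_ne hvz]
    by_cases hxv : G.Adj x v
    · have hvfar := hT.dist_eq_dist_add_one_of_adj_of_ne hxz hzy hxv hvz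
      have hvy : v ≠ y := by rintro rfl; simp at hvfar
      rw [hFmul v y x hvy hxv.symm hvfar, mul_assoc]
    · simp [hp0 x v hxv]
  have hsum := ((hu.mul_right (F x y)).update z ((p x z : ℂ) * F z y))
  rw [hterm] at hsum
  have hval :
      (p x z : ℂ) * F z y - (p x z : ℂ) * f z x * F x y + u x * F x y = lam * F x y := by
    rw [hF]
    linear_combination (-F z y) * hla z hxz
  exact hval ▸ hsum

end Resolvent

theorem stmt11_general {V : Type*} [DecidableEq V] (G : SimpleGraph V) (hT : G.IsTree)
    (p : V → V → ℝ)
    (hp0 : ∀ x y, ¬ G.Adj x y → p x y = 0)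
    (lam : ℂ) (f : V → V → ℂ) (u : V → ℂ)
    (hu : ∀ x, HasSum (fun v => (p x v : ℂ) * f v x) (u x))
    (hnela : ∀ x, u x ≠ lam)
    (hla : ∀ x y, G.Adj x y →
      lam * f x y = (p x y : ℂ) + (u x - (p x y : ℂ) * f y x) * f x y)
    (F : V → V → ℂ)
    (hFdiag : ∀ x, F x x = 1)
    (hFmul : ∀ x y z : V, x ≠ y → G.Adj x z → G.dist z y + 1 = G.dist x y →
      F x y = f x z * F z y)
    (g : V → V → ℂ)
    (hg : ∀ x y, g x y = F x y / (lam - u y))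
    (x y : V) :
    HasSum (fun v => (p x v : ℂ) * g v y)
      (lam * g x y - (if x = y then 1 else 0)) := by
  have hc : lam - u y ≠ 0 := sub_ne_zero.mpr (hnela y).symm
  suffices h : HasSum (fun v => (p x v : ℂ) * F v y)
      (lam * F x y - (if x = y then 1 else 0) * (lam - u y)) by
    have hval : lam * g x y - (if x = y then 1 else 0) =
        (lam * F x y - (if x = y then 1 else 0) * (lam - u y)) / (lam - u y) := by
      rw [hg, sub_div, mul_div_cancel_right₀ _ hc, mul_div_assoc]
    rw [hval]
    simpa only [hg, mul_div_assoc] using h.div_const (lam - u y)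
  split_ifs with hxy
  · subst hxy
    simpa [hFdiag] using hasSum_mul_geodesicProduct_self hp0 x (hu x) hFdiag hFmul
  · simpa using hasSum_mul_geodesicProduct_of_ne hT hp0 hxy (hu x) (hla x) hFmul

/-- Under the λ-weight axioms, setting `g(x,y) = F(x,y)/(λ - u(y,y))` (with `F` the
multiplicative extension of the weights along geodesics), the function `x ↦ g(x,y)`
satisfies the resolvent equation `Pg(·,y)(x) = λ g(x,y) - δ_x(y)` for all `x, y`. -/
theorem stmt11 {V : Type*} [Countable V] [DecidableEq V] (G : SimpleGraph V) (hT : G.IsTree)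
    (p : V → V → ℝ)
    (hpadj : ∀ x y, 0 < p x y ↔ G.Adj x y)
    (hp0 : ∀ x y, ¬ G.Adj x y → p x y = 0)
    (hstoch : ∀ x, HasSum (fun y => p x y) 1)
    (lam : ℂ) (f : V → V → ℂ) (u : V → ℂ)
    (hu : ∀ x, HasSum (fun v => (p x v : ℂ) * f v x) (u x))
    (hne1 : ∀ x y, G.Adj x y → f x y * f y x ≠ 1)
    (hnela : ∀ x, u x ≠ lam)
    (hla : ∀ x y, G.Adj x y →
      lam * f x y = (p x y : ℂ) + (u x - (p x y : ℂ) * f y x) * f x y)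
    (F : V → V → ℂ)
    (hFdiag : ∀ x, F x x = 1)
    (hFmul : ∀ x y z : V, x ≠ y → G.Adj x z → G.dist z y + 1 = G.dist x y →
      F x y = f x z * F z y)
    (g : V → V → ℂ)
    (hg : ∀ x y, g x y = F x y / (lam - u y))
    (x y : V) :
    HasSum (fun v => (p x v : ℂ) * g v y)
      (lam * g x y - (if x = y then 1 else 0)) :=
  stmt11_general G hT p hp0 lam f u hu hnela hla F hFdiag hFmul g hg x y
end

section
/- Under the λ-weight axioms, for neighbours x ∼ y: g(x,x)g(y,y) = g(x,y)·(1/p(x,y) + g(y,x)), where g(x,y) = f(x,y)/(λ - u(y,y)). -/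
/-! Clearing denominators, the identity is the λ-weight equation for the edge `x ∼ y`,
rearranged as `f(x,y) (λ - u(x) + p(x,y) f(y,x)) = p(x,y)`. -/

theorem one_div_mul_one_div_eq_of_lambda_weight {K : Type*} [Field K] {lam a b p s t : K}
    (hp : p ≠ 0) (ha : lam - a ≠ 0) (hb : lam - b ≠ 0)
    (h : lam * s = p + (a - p * t) * s) :
    1 / (lam - a) * (1 / (lam - b)) = s / (lam - b) * (1 / p + t / (lam - a)) := by
  have hs : s * (lam - a + p * t) = p := by linear_combination h
  field_simp
  linear_combination -hs

theorem stmt13_general {V : Type*} (G : SimpleGraph V)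
    (p : V → V → ℝ)
    (hpadj : ∀ x y, 0 < p x y ↔ G.Adj x y)
    (lam : ℂ) (f : V → V → ℂ) (u : V → ℂ)
    (hnela : ∀ x, u x ≠ lam)
    (hla : ∀ x y, G.Adj x y →
      lam * f x y = (p x y : ℂ) + (u x - (p x y : ℂ) * f y x) * f x y)
    (g : V → V → ℂ)
    (hg : ∀ x y, G.Adj x y → g x y = f x y / (lam - u y))
    (hgdiag : ∀ x, g x x = 1 / (lam - u x))
    (x y : V) (hxy : G.Adj x y) :
    g x x * g y y = g x y * (1 / (p x y : ℂ) + g y x) := by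
  have hp : (p x y : ℂ) ≠ 0 := by exact_mod_cast ((hpadj x y).mpr hxy).ne'
  rw [hgdiag, hgdiag, hg x y hxy, hg y x hxy.symm]
  exact one_div_mul_one_div_eq_of_lambda_weight hp (sub_ne_zero.mpr (hnela x).symm)
    (sub_ne_zero.mpr (hnela y).symm) (hla x y hxy)

/-- Under the λ-weight axioms, for neighbours `x ∼ y`:
`g(x,x)g(y,y) = g(x,y)(1/p(x,y) + g(y,x))`, where `g(x,y) = f(x,y)/(λ - u(y,y))`. -/
theorem stmt13 {V : Type*} [Countable V] (G : SimpleGraph V) (hT : G.IsTree)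
    (p : V → V → ℝ)
    (hpadj : ∀ x y, 0 < p x y ↔ G.Adj x y)
    (hp0 : ∀ x y, ¬ G.Adj x y → p x y = 0)
    (hstoch : ∀ x, HasSum (fun y => p x y) 1)
    (lam : ℂ) (f : V → V → ℂ) (u : V → ℂ)
    (hu : ∀ x, HasSum (fun v => (p x v : ℂ) * f v x) (u x))
    (hne1 : ∀ x y, G.Adj x y → f x y * f y x ≠ 1)
    (hnela : ∀ x, u x ≠ lam)
    (hla : ∀ x y, G.Adj x y →
      lam * f x y = (p x y : ℂ) + (u x - (p x y : ℂ) * f y x) * f x y)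
    (g : V → V → ℂ)
    (hg : ∀ x y, G.Adj x y → g x y = f x y / (lam - u y))
    (hgdiag : ∀ x, g x x = 1 / (lam - u x))
    (x y : V) (hxy : G.Adj x y) :
    g x x * g y y = g x y * (1 / (p x y : ℂ) + g y x) :=
  stmt13_general G p hpadj lam f u hnela hla g hg hgdiag x y hxy
end

section
/- Under the λ-weight axioms, for every vertex x: λ·g(x,x) = 1 + Σ_{y∼x} f(x,y)f(y,x)/(1 - f(x,y)f(y,x)), with the sum converging absolutely when x has infinite degree. -/
/-! The weight equation `λ f(x,y) = p(x,y) + (u(x) - p(x,y) f(y,x)) f(x,y)` rearranges to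
`f(x,y) (λ - u(x)) = p(x,y) (1 - f(x,y) f(y,x))`, so each summand
`f(x,y) f(y,x) / (1 - f(x,y) f(y,x))` equals `p(x,y) f(y,x) / (λ - u(x))`. Summing over `y` gives
`u(x) / (λ - u(x)) = λ g(x,x) - 1`. -/

lemma mul_div_one_sub_mul_eq_of_weight_eq {K : Type*} [Field K] {lam u p a b : K}
    (h : lam * a = p + (u - p * b) * a) (hab : 1 - a * b ≠ 0) (hlu : lam - u ≠ 0) :
    a * b / (1 - a * b) = p * b / (lam - u) := by
  rw [div_eq_div_iff hab hlu]
  linear_combination b * h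

theorem stmt14_general {V : Type*} (G : SimpleGraph V) [DecidableRel G.Adj]
    (p : V → V → ℝ)
    (hp0 : ∀ x y, ¬ G.Adj x y → p x y = 0)
    (lam : ℂ) (f : V → V → ℂ) (u : V → ℂ)
    (hu : ∀ x, HasSum (fun v => (p x v : ℂ) * f v x) (u x))
    (hne1 : ∀ x y, G.Adj x y → f x y * f y x ≠ 1)
    (hnela : ∀ x, u x ≠ lam)
    (hla : ∀ x y, G.Adj x y →
      lam * f x y = (p x y : ℂ) + (u x - (p x y : ℂ) * f y x) * f x y)
    (x : V) :
    HasSum (fun y => if G.Adj x y then f x y * f y x / (1 - f x y * f y x) else 0)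
      (lam * (1 / (lam - u x)) - 1) := by
  have hlu : lam - u x ≠ 0 := sub_ne_zero.mpr (hnela x).symm
  have hterm : (fun y => if G.Adj x y then f x y * f y x / (1 - f x y * f y x) else 0)
      = fun y => (p x y : ℂ) * f y x / (lam - u x) := by
    funext y
    by_cases hxy : G.Adj x y
    · rw [if_pos hxy]
      exact mul_div_one_sub_mul_eq_of_weight_eq (hla x y hxy)
        (sub_ne_zero.mpr (hne1 x y hxy).symm) hlu
    · simp [hxy, hp0 x y hxy]
  have hsum : u x / (lam - u x) = lam * (1 / (lam - u x)) - 1 := by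
    field_simp
    ring
  rw [hterm, ← hsum]
  exact (hu x).div_const _

/-- Under the λ-weight axioms, for every vertex `x`:
`λ·g(x,x) = 1 + Σ_{y∼x} f(x,y)f(y,x)/(1 - f(x,y)f(y,x))`, with the sum converging
(absolutely) even when `x` has infinite degree; here `g(x,x) = 1/(λ - u(x,x))`. -/
theorem stmt14 {V : Type*} [Countable V] (G : SimpleGraph V) [DecidableRel G.Adj] (hT : G.IsTree)
    (p : V → V → ℝ)
    (hpadj : ∀ x y, 0 < p x y ↔ G.Adj x y)
    (hp0 : ∀ x y, ¬ G.Adj x y → p x y = 0)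
    (hstoch : ∀ x, HasSum (fun y => p x y) 1)
    (lam : ℂ) (f : V → V → ℂ) (u : V → ℂ)
    (hu : ∀ x, HasSum (fun v => (p x v : ℂ) * f v x) (u x))
    (hne1 : ∀ x y, G.Adj x y → f x y * f y x ≠ 1)
    (hnela : ∀ x, u x ≠ lam)
    (hla : ∀ x y, G.Adj x y →
      lam * f x y = (p x y : ℂ) + (u x - (p x y : ℂ) * f y x) * f x y)
    (x : V) :
    HasSum (fun y => if G.Adj x y then f x y * f y x / (1 - f x y * f y x) else 0)
      (lam * (1 / (lam - u x)) - 1) :=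
  stmt14_general G p hp0 lam f u hu hne1 hnela hla x
end

section
/- Under the λ-weight axioms, any function h: T → ℂ with Ph = λh satisfies, for every vertex x, h(x) = Σ_{y∼x} f(x,y)·(h(y) - f(y,x)h(x))/(1 - f(x,y)f(y,x)), the sum converging absolutely when deg(x) = ∞ (assuming Ph(x) is defined by an absolutely convergent sum). -/
/-! Axiom (3.10) says exactly that `f(x,y)(λ - u(x)) = p(x,y)(1 - f(x,y)f(y,x))`, so each term of
the sum equals `p(x,y)(h(y) - f(y,x)h(x))/(λ - u(x))`. Summing over `y` with `Ph = λh` and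
`Σ_y p(x,y)f(y,x) = u(x)` gives `(λh(x) - u(x)h(x))/(λ - u(x)) = h(x)`. -/

theorem div_one_sub_mul_eq_div_sub {K : Type*} [Field K] {lam u p a b : K}
    (hab : a * b ≠ 1) (hu : u ≠ lam) (h : lam * a = p + (u - p * b) * a) :
    a / (1 - a * b) = p / (lam - u) := by
  rw [div_eq_div_iff (sub_ne_zero.mpr hab.symm) (sub_ne_zero.mpr hu.symm)]
  linear_combination h

theorem hasSum_div_sub_mul_sub {ι K : Type*} [Field K] [TopologicalSpace K]
    [IsTopologicalRing K] {q h g : ι → K} {lam u c : K}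
    (hh : HasSum (fun y => q y * h y) (lam * c)) (hg : HasSum (fun y => q y * g y) u)
    (hu : u ≠ lam) :
    HasSum (fun y => q y / (lam - u) * (h y - g y * c)) c := by
  have hsum := (hh.sub (hg.mul_right c)).div_const (lam - u)
  rw [← sub_mul, mul_div_cancel_left₀ c (sub_ne_zero.mpr hu.symm)] at hsum
  convert hsum using 2 with y
  ring

theorem stmt15_general {V : Type*} (G : SimpleGraph V) [DecidableRel G.Adj]
    (p : V → V → ℝ)
    (hp0 : ∀ x y, ¬ G.Adj x y → p x y = 0)
    (lam : ℂ) (f : V → V → ℂ) (u : V → ℂ)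
    (hu : ∀ x, HasSum (fun v => (p x v : ℂ) * f v x) (u x))
    (hne1 : ∀ x y, G.Adj x y → f x y * f y x ≠ 1)
    (hnela : ∀ x, u x ≠ lam)
    (hla : ∀ x y, G.Adj x y →
      lam * f x y = (p x y : ℂ) + (u x - (p x y : ℂ) * f y x) * f x y)
    (h : V → ℂ)
    (hharm : ∀ x, HasSum (fun y => (p x y : ℂ) * h y) (lam * h x))
    (x : V) :
    HasSum
      (fun y => if G.Adj x y then f x y * (h y - f y x * h x) / (1 - f x y * f y x) else 0)
      (h x) := by
  refine (hasSum_div_sub_mul_sub (hharm x) (hu x) (hnela x)).congr_fun fun y => ?_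
  split_ifs with hadj
  · rw [mul_div_right_comm, div_one_sub_mul_eq_div_sub (hne1 x y hadj) (hnela x) (hla x y hadj)]
  · simp [hp0 x y hadj]

/-- Under the λ-weight axioms, any `h : T → ℂ` with `Ph = λh` (the defining sums being
absolutely convergent) satisfies, for every vertex `x`,
`h(x) = Σ_{y∼x} f(x,y)(h(y) - f(y,x)h(x))/(1 - f(x,y)f(y,x))`,
the sum converging absolutely even at vertices of infinite degree. -/
theorem stmt15 {V : Type*} [Countable V] (G : SimpleGraph V) [DecidableRel G.Adj] (hT : G.IsTree)
    (p : V → V → ℝ)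
    (hpadj : ∀ x y, 0 < p x y ↔ G.Adj x y)
    (hp0 : ∀ x y, ¬ G.Adj x y → p x y = 0)
    (hstoch : ∀ x, HasSum (fun y => p x y) 1)
    (lam : ℂ) (f : V → V → ℂ) (u : V → ℂ)
    (hu : ∀ x, HasSum (fun v => (p x v : ℂ) * f v x) (u x))
    (hne1 : ∀ x y, G.Adj x y → f x y * f y x ≠ 1)
    (hnela : ∀ x, u x ≠ lam)
    (hla : ∀ x y, G.Adj x y →
      lam * f x y = (p x y : ℂ) + (u x - (p x y : ℂ) * f y x) * f x y)
    (h : V → ℂ)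
    (hharm : ∀ x, HasSum (fun y => (p x y : ℂ) * h y) (lam * h x))
    (x : V) :
    HasSum
      (fun y => if G.Adj x y then f x y * (h y - f y x * h x) / (1 - f x y * f y x) else 0)
      (h x) :=
  stmt15_general G p hp0 lam f u hu hne1 hnela hla h hharm x
end
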